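/- arXiv:2511.13903 — 5 statements merged into one kernel-verified Lean document; each statement's English description precedes it below -/
import Mathlib

section
/- Let N be a positive integer and let A be a real N×N matrix satisfying properties (P1)–(P3). Then the largest eigenvalue λ(A) of A is strictly positive if and only if there exists a vector m ∈ ℝ_+^N such that A·m ∈ ℝ_+^N (i.e., every entry of A·m is strictly positive). -/
open Matrix

private lemma aux_psd (N : ℕ) (A : Matrix (Fin N) (Fin N) ℝ) (hP1 : A.IsHermitian) (μ : ℝ)
    (hμ : ∀ i, hP1.eigenvalues i ≤ μ) : (μ • 1 - A).PosSemidef := by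
  have hs := hP1.spectral_theorem
  set U : Matrix (Fin N) (Fin N) ℝ := (hP1.eigenvectorUnitary : Matrix (Fin N) (Fin N) ℝ)
  have hUU : U * star U = 1 := Matrix.mem_unitaryGroup_iff.mp hP1.eigenvectorUnitary.2
  have key : μ • 1 - A = U * Matrix.diagonal (fun i => μ - hP1.eigenvalues i) * star U := by
    have hd : Matrix.diagonal (fun i => μ - hP1.eigenvalues i)
        = μ • (1 : Matrix (Fin N) (Fin N) ℝ)
          - Matrix.diagonal (RCLike.ofReal ∘ hP1.eigenvalues) := by
      ext i j
      simp [Matrix.diagonal_apply, Matrix.one_apply]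
      split <;> simp
    rw [hd, Matrix.mul_sub, Matrix.sub_mul,
      ← (show A = U * Matrix.diagonal (RCLike.ofReal ∘ hP1.eigenvalues) * star U from hs), Matrix.mul_smul, Matrix.smul_mul, mul_one, hUU]
  rw [key]
  exact (Matrix.posSemidef_diagonal_iff.mpr
    (fun i => sub_nonneg.mpr (hμ i))).mul_mul_conjTranspose_same U

private lemma aux_rayleigh (N : ℕ) (A : Matrix (Fin N) (Fin N) ℝ) (hP1 : A.IsHermitian) (μ : ℝ)
    (hμ : ∀ i, hP1.eigenvalues i ≤ μ) (x : Fin N → ℝ) :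
    x ⬝ᵥ A.mulVec x ≤ μ * (x ⬝ᵥ x) := by
  have h := (aux_psd N A hP1 μ hμ).dotProduct_mulVec_nonneg x
  simp only [star_trivial, Matrix.sub_mulVec, Matrix.smul_mulVec, Matrix.one_mulVec,
    dotProduct_sub, dotProduct_smul, smul_eq_mul, RCLike.re_to_real] at h
  linarith

/-- Koike–Uehara, Proposition 3.2 (i).
Let `N` be a positive integer and `A` a real `N × N` matrix satisfying:
(P1) `A` is symmetric (over `ℝ` this is `A.IsHermitian`);
(P2) every off-diagonal entry of `A` is nonnegative;
(P3) for every partition of `{1, …, N}` into two nonempty parts `I` and `Iᶜ`,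
some entry `A i j` with `i ∈ I`, `j ∈ Iᶜ` is strictly positive.
Then the largest eigenvalue `λ(A) = ⨆ i, eigenvalues i` is strictly positive
if and only if there exists `m ∈ ℝ₊^N` (all entries strictly positive) such
that all entries of `A · m` are strictly positive. -/
theorem largest_eigenvalue_pos_iff
    (N : ℕ) (hN : 0 < N) (A : Matrix (Fin N) (Fin N) ℝ)
    (hP1 : A.IsHermitian)
    (hP2 : ∀ i j : Fin N, i ≠ j → 0 ≤ A i j)
    (hP3 : ∀ I : Set (Fin N), I.Nonempty → Iᶜ.Nonempty →
      ∃ i ∈ I, ∃ j ∈ Iᶜ, 0 < A i j) :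
    (0 < ⨆ i, hP1.eigenvalues i) ↔
      ∃ m : Fin N → ℝ, (∀ i, 0 < m i) ∧ (∀ i, 0 < A.mulVec m i) := by
  have : Nonempty (Fin N) := ⟨⟨0, hN⟩⟩
  set μ := ⨆ i, hP1.eigenvalues i with hμdef
  obtain ⟨i₀, hi₀⟩ := Finite.exists_max hP1.eigenvalues
  have hμmax : ∀ i, hP1.eigenvalues i ≤ μ := fun i =>
    le_ciSup (Set.Finite.bddAbove (Set.finite_range _)) i
  have hμeq : μ = hP1.eigenvalues i₀ :=
    le_antisymm (ciSup_le hi₀) (hμmax i₀)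
  constructor
  · -- forward direction
    intro hμpos
    set v : Fin N → ℝ := ⇑(hP1.eigenvectorBasis i₀) with hv
    have hAv : A.mulVec v = μ • v := by
      rw [hμeq]; exact hP1.mulVec_eigenvectorBasis i₀
    have hvne : ∃ j, v j ≠ 0 := by
      by_contra h
      push_neg at h
      exact hP1.eigenvectorBasis.orthonormal.ne_zero i₀ (by ext j; exact h j)
    set w : Fin N → ℝ := fun j => |v j| with hw
    have hwnn : ∀ j, 0 ≤ w j := fun j => abs_nonneg _
    have hww : w ⬝ᵥ w = v ⬝ᵥ v := by
      simp [dotProduct, hw, abs_mul_abs_self]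
    have hvAv : v ⬝ᵥ A.mulVec v = μ * (v ⬝ᵥ v) := by
      rw [hAv, dotProduct_smul, smul_eq_mul]
    have hle : v ⬝ᵥ A.mulVec v ≤ w ⬝ᵥ A.mulVec w := by
      simp only [dotProduct, Matrix.mulVec, Finset.mul_sum]
      refine Finset.sum_le_sum fun i _ => Finset.sum_le_sum fun j _ => ?_
      rcases eq_or_ne i j with rfl | hij
      · refine le_of_eq ?_
        simp only [hw]
        linear_combination A i i * (abs_mul_abs_self (v i)).symm
      · have h2 : v i * v j ≤ w i * w j := by
          rw [hw, ← abs_mul]; exact le_abs_self _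
        have := mul_le_mul_of_nonneg_left h2 (hP2 i j hij)
        nlinarith [hP2 i j hij]
    -- w is an eigenvector for μ
    have hBw : (μ • 1 - A).mulVec w = 0 := by
      have hpsd := aux_psd N A hP1 μ hμmax
      have h0 : w ⬝ᵥ (μ • 1 - A).mulVec w = 0 := by
        have hle2 : w ⬝ᵥ (μ • 1 - A).mulVec w ≤ 0 := by
          simp only [Matrix.sub_mulVec, Matrix.smul_mulVec, Matrix.one_mulVec,
            dotProduct_sub, dotProduct_smul, smul_eq_mul]
          rw [hww]
          linarith
        have hge := hpsd.dotProduct_mulVec_nonneg w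
        simp only [star_trivial, RCLike.re_to_real] at hge
        linarith
      have := (hpsd.dotProduct_mulVec_zero_iff w).mp (by simpa using h0)
      exact this
    have hAw : A.mulVec w = μ • w := by
      have : μ • w - A.mulVec w = 0 := by
        have := hBw
        simpa [Matrix.sub_mulVec, Matrix.smul_mulVec, Matrix.one_mulVec] using this
      have := sub_eq_zero.mp this
      exact this.symm
    -- w is strictly positive everywhere
    have hwpos : ∀ i, 0 < w i := by
      by_contra h
      push_neg at h
      obtain ⟨i1, hi1⟩ := h
      have hi1' : w i1 = 0 := le_antisymm hi1 (hwnn i1)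
      set I : Set (Fin N) := {i | w i = 0} with hI
      have hIne : I.Nonempty := ⟨i1, hi1'⟩
      have hIcne : Iᶜ.Nonempty := by
        obtain ⟨j, hj⟩ := hvne
        exact ⟨j, by simp [hI, hw, abs_eq_zero]; exact hj⟩
      obtain ⟨i, hiI, j, hjI, hij⟩ := hP3 I hIne hIcne
      have hwj : 0 < w j := lt_of_le_of_ne (hwnn j) (Ne.symm hjI)
      have hwi : w i = 0 := hiI
      have hpos : 0 < A.mulVec w i := by
        rw [Matrix.mulVec, dotProduct]
        refine Finset.sum_pos' (fun k _ => ?_) ⟨j, Finset.mem_univ j, ?_⟩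
        · rcases eq_or_ne i k with rfl | hik
          · simp [hwi]
          · exact mul_nonneg (hP2 i k hik) (hwnn k)
        · exact mul_pos hij hwj
      rw [hAw] at hpos
      simp [hwi] at hpos
    exact ⟨w, hwpos, fun i => by
      rw [hAw]
      exact mul_pos hμpos (hwpos i)⟩
  · -- backward direction
    rintro ⟨m, hm, hAm⟩
    by_contra h
    push_neg at h
    have h1 : 0 < m ⬝ᵥ A.mulVec m :=
      Finset.sum_pos (fun i _ => mul_pos (hm i) (hAm i)) Finset.univ_nonempty
    have h2 : m ⬝ᵥ A.mulVec m ≤ μ * (m ⬝ᵥ m) := aux_rayleigh N A hP1 μ hμmax m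
    have h3 : 0 ≤ m ⬝ᵥ m := Finset.sum_nonneg fun i _ => mul_self_nonneg _
    nlinarith
end

section
/- Let N be a positive integer and let A be a real N×N matrix satisfying properties (P1)–(P3). Then the largest eigenvalue λ(A) of A equals 0 if and only if there exists a vector m ∈ ℝ_+^N such that A·m = 0. -/
open Finset Matrix

/-- Key identity: a symmetric real matrix with nonnegative off-diagonal entries and zero
row sums has nonpositive quadratic form. -/
private lemma zero_rowsum_quad_nonpos {N : ℕ} (B : Matrix (Fin N) (Fin N) ℝ)
    (hsym : ∀ i j, B j i = B i j) (hrow : ∀ i, ∑ j, B i j = 0)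
    (hoff : ∀ i j, i ≠ j → 0 ≤ B i j) (y : Fin N → ℝ) :
    ∑ i, ∑ j, B i j * y i * y j ≤ 0 := by
  have h1 : 0 ≤ ∑ i, ∑ j, B i j * (y i - y j)^2 := by
    refine Finset.sum_nonneg fun i _ => Finset.sum_nonneg fun j _ => ?_
    rcases eq_or_ne i j with rfl | h
    · simp
    · exact mul_nonneg (hoff i j h) (sq_nonneg _)
  have h2 : ∑ i, ∑ j, B i j * (y i - y j)^2
      = -2 * ∑ i, ∑ j, B i j * y i * y j := by
    have e1 : ∀ i j : Fin N, B i j * (y i - y j)^2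
        = B i j * y i^2 + B i j * y j^2 - 2*(B i j * y i * y j) := fun i j => by ring
    have hA' : ∑ i, ∑ j : Fin N, B i j * y i ^ 2 = 0 :=
      Finset.sum_eq_zero fun i _ => by rw [← Finset.sum_mul, hrow i, zero_mul]
    have hB' : ∑ i, ∑ j : Fin N, B i j * y j ^ 2 = 0 := by
      rw [Finset.sum_comm]
      refine Finset.sum_eq_zero fun j _ => ?_
      rw [← Finset.sum_mul]
      have : (∑ i, B i j) = ∑ i, B j i := Finset.sum_congr rfl fun i _ => (hsym i j).symm
      rw [this, hrow j, zero_mul]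
    calc ∑ i, ∑ j, B i j * (y i - y j)^2
        = ∑ i, ∑ j, (B i j * y i^2 + B i j * y j^2 - 2*(B i j * y i * y j)) := by
          simp_rw [e1]
      _ = (∑ i, ∑ j, B i j * y i^2) + (∑ i, ∑ j, B i j * y j^2)
            - 2 * (∑ i, ∑ j, B i j * y i * y j) := by
          simp only [Finset.sum_sub_distrib, Finset.sum_add_distrib, ← Finset.mul_sum]
      _ = -2 * ∑ i, ∑ j, B i j * y i * y j := by rw [hA', hB']; ring
  linarith

/-- If `-A` is positive semidefinite, every eigenvalue of hermitian `A` is nonpositive. -/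
private lemma eigenvalues_nonpos_of_negPSD {N : ℕ} {A : Matrix (Fin N) (Fin N) ℝ}
    (hP1 : A.IsHermitian) (hNeg : (-A).PosSemidef) (i : Fin N) :
    hP1.eigenvalues i ≤ 0 := by
  set v : Fin N → ℝ := ⇑(hP1.eigenvectorBasis i) with hv
  have hvv : 0 < v ⬝ᵥ v := by
    have hnn : (0:ℝ) ≤ v ⬝ᵥ v := Finset.sum_nonneg fun k _ => mul_self_nonneg _
    rcases hnn.lt_or_eq with h | h
    · exact h
    · exfalso
      have hv0 : v = 0 := dotProduct_self_eq_zero.mp h.symm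
      have hnorm : ‖hP1.eigenvectorBasis i‖ = 1 := hP1.eigenvectorBasis.orthonormal.1 i
      rw [show hP1.eigenvectorBasis i = 0 from ?_ ] at hnorm
      · simp at hnorm
      · ext k; exact congrFun hv0 k
  have h := hNeg.dotProduct_mulVec_nonneg v
  rw [star_trivial, Matrix.neg_mulVec, hP1.mulVec_eigenvectorBasis i] at h
  rw [← hv] at h
  rw [dotProduct_neg, dotProduct_smul, smul_eq_mul] at h
  nlinarith

/-- If `A` is symmetric with nonnegative off-diagonal entries and `A m = 0` for some
positive `m`, then `-A` is positive semidefinite. -/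
private lemma negPSD_of_nullvec {N : ℕ} {A : Matrix (Fin N) (Fin N) ℝ}
    (hP1 : A.IsHermitian) (hP2 : ∀ i j : Fin N, i ≠ j → 0 ≤ A i j)
    {m : Fin N → ℝ} (hm : ∀ i, 0 < m i) (hAm : A.mulVec m = 0) :
    (-A).PosSemidef := by
  have hsymA : ∀ i j, A j i = A i j := fun i j => by
    have := congrFun (congrFun hP1 i) j
    simpa [Matrix.conjTranspose_apply] using this
  refine Matrix.PosSemidef.of_dotProduct_mulVec_nonneg hP1.neg fun x => ?_
  set B : Matrix (Fin N) (Fin N) ℝ := fun i j => A i j * (m i * m j) with hB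
  have hquad : ∑ i, ∑ j, B i j * (x i / m i) * (x j / m j) ≤ 0 := by
    refine zero_rowsum_quad_nonpos B (fun i j => by simp only [hB]; rw [hsymA i j]; ring)
      (fun i => ?_) (fun i j hij => mul_nonneg (hP2 i j hij)
        (mul_nonneg (hm i).le (hm j).le)) _
    have h0 : (A.mulVec m) i = 0 := congrFun hAm i
    simp only [Matrix.mulVec, dotProduct] at h0
    simp only [hB]
    calc ∑ j, A i j * (m i * m j) = m i * ∑ j, A i j * m j := by
          rw [Finset.mul_sum]; exact Finset.sum_congr rfl fun j _ => by ring
      _ = 0 := by rw [h0, mul_zero]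
  have hEq : x ⬝ᵥ A.mulVec x = ∑ i, ∑ j, B i j * (x i / m i) * (x j / m j) := by
    simp only [dotProduct, Matrix.mulVec, Finset.mul_sum]
    refine Finset.sum_congr rfl fun i _ => Finset.sum_congr rfl fun j _ => ?_
    simp only [hB]
    have hmi : m i ≠ 0 := (hm i).ne'
    have hmj : m j ≠ 0 := (hm j).ne'
    field_simp
  rw [star_trivial, Matrix.neg_mulVec, dotProduct_neg]
  linarith [hEq ▸ hquad]

/-- Koike–Uehara, Proposition 3.2 (ii).
For a real `N × N` matrix `A` (with `N > 0`) satisfying (P1)–(P3), the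
largest eigenvalue `λ(A)` equals `0` if and only if there exists a vector
`m` with all entries strictly positive such that `A · m = 0`. -/
theorem largest_eigenvalue_eq_zero_iff
    (N : ℕ) (hN : 0 < N) (A : Matrix (Fin N) (Fin N) ℝ)
    (hP1 : A.IsHermitian)
    (hP2 : ∀ i j : Fin N, i ≠ j → 0 ≤ A i j)
    (hP3 : ∀ I : Set (Fin N), I.Nonempty → Iᶜ.Nonempty →
      ∃ i ∈ I, ∃ j ∈ Iᶜ, 0 < A i j) :
    ((⨆ i, hP1.eigenvalues i) = 0) ↔
      ∃ m : Fin N → ℝ, (∀ i, 0 < m i) ∧ A.mulVec m = 0 := by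
  have : Nonempty (Fin N) := Fin.pos_iff_nonempty.mp hN
  have hsymA : ∀ i j, A j i = A i j := fun i j => by
    have := congrFun (congrFun hP1 i) j
    simpa [Matrix.conjTranspose_apply] using this
  have hbdd : BddAbove (Set.range hP1.eigenvalues) := (Set.finite_range _).bddAbove
  constructor
  · intro hsup
    -- all eigenvalues ≤ 0
    have hle : ∀ i, hP1.eigenvalues i ≤ 0 := fun i => hsup ▸ le_ciSup hbdd i
    -- -A is PSD via spectral theorem
    have hNeg : (-A).PosSemidef := by
      have hst := hP1.spectral_theorem
      have hD : (Matrix.diagonal (fun i => -hP1.eigenvalues i) : Matrix (Fin N) (Fin N) ℝ)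
          = -(Matrix.diagonal (RCLike.ofReal ∘ hP1.eigenvalues)) := by
        rw [← Matrix.diagonal_neg]
        congr 1
      have key : -A = (hP1.eigenvectorUnitary : Matrix (Fin N) (Fin N) ℝ) *
          Matrix.diagonal (fun i => -hP1.eigenvalues i) *
          ((hP1.eigenvectorUnitary : Matrix (Fin N) (Fin N) ℝ))ᴴ := by
        rw [hD, Matrix.mul_neg, Matrix.neg_mul, neg_inj, ← Matrix.star_eq_conjTranspose]
        exact hst
      rw [key]
      exact (Matrix.PosSemidef.diagonal fun i => neg_nonneg.mpr (hle i)).mul_mul_conjTranspose_same _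
    -- sup is attained: some eigenvalue equals 0
    obtain ⟨i0, hi0⟩ := Finite.exists_max hP1.eigenvalues
    have hi0' : hP1.eigenvalues i0 = 0 := by
      have h1 : hP1.eigenvalues i0 ≤ 0 := hle i0
      have h2 : (⨆ i, hP1.eigenvalues i) ≤ hP1.eigenvalues i0 := ciSup_le hi0
      linarith [hsup ▸ h2]
    set v : Fin N → ℝ := ⇑(hP1.eigenvectorBasis i0) with hvdef
    have hAv : A.mulVec v = 0 := by
      have := hP1.mulVec_eigenvectorBasis i0
      rw [hi0'] at this
      simpa [hvdef] using this
    have hvne : v ≠ 0 := by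
      intro h0
      have hnorm : ‖hP1.eigenvectorBasis i0‖ = 1 := hP1.eigenvectorBasis.orthonormal.1 i0
      rw [show hP1.eigenvectorBasis i0 = 0 from ?_] at hnorm
      · simp at hnorm
      · ext k; exact congrFun h0 k
    set m : Fin N → ℝ := fun i => |v i| with hmdef
    -- quadratic form at m vanishes
    have hql : m ⬝ᵥ A.mulVec m ≤ 0 := by
      have := hNeg.dotProduct_mulVec_nonneg m
      rw [star_trivial, Matrix.neg_mulVec, dotProduct_neg] at this
      linarith
    have hqg : 0 ≤ m ⬝ᵥ A.mulVec m := by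
      have hvq : v ⬝ᵥ A.mulVec v = 0 := by rw [hAv, dotProduct_zero]
      have hcomp : v ⬝ᵥ A.mulVec v ≤ m ⬝ᵥ A.mulVec m := by
        simp only [dotProduct, Matrix.mulVec, Finset.mul_sum]
        refine Finset.sum_le_sum fun i _ => Finset.sum_le_sum fun j _ => ?_
        rcases eq_or_ne i j with rfl | hij
        · simp only [hmdef]
          rw [show v i * (A i i * v i) = A i i * (v i * v i) from by ring,
            show |v i| * (A i i * |v i|) = A i i * (|v i| * |v i|) from by ring,
            abs_mul_abs_self]
        · simp only [hmdef]
          rw [show v i * (A i j * v j) = A i j * (v i * v j) from by ring,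
            show |v i| * (A i j * |v j|) = A i j * (|v i| * |v j|) from by ring,
            ← abs_mul]
          exact mul_le_mul_of_nonneg_left (le_abs_self _) (hP2 i j hij)
      linarith
    have hq0 : m ⬝ᵥ A.mulVec m = 0 := le_antisymm hql hqg
    have hAm : A.mulVec m = 0 := by
      have := (hNeg.dotProduct_mulVec_zero_iff m).mp ?_
      · rw [Matrix.neg_mulVec, neg_eq_zero] at this; exact this
      · rw [star_trivial, Matrix.neg_mulVec, dotProduct_neg, hq0, neg_zero]
    refine ⟨m, ?_, hAm⟩
    -- positivity of m via (P3)
    by_contra hcon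
    push_neg at hcon
    obtain ⟨j0, hj0⟩ := hcon
    have hIne : ({i | 0 < m i} : Set (Fin N)).Nonempty := by
      obtain ⟨k, hk⟩ := Function.ne_iff.mp hvne
      exact ⟨k, abs_pos.mpr hk⟩
    have hIcne : ({i | 0 < m i} : Set (Fin N))ᶜ.Nonempty := ⟨j0, not_lt.mpr hj0⟩
    obtain ⟨i, hiI, j, hjI, hAij⟩ := hP3 _ hIne hIcne
    have hmj : m j = 0 := le_antisymm (not_lt.mp hjI) (abs_nonneg _)
    have hterm : ∀ k, 0 ≤ A j k * m k := by
      intro k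
      rcases eq_or_ne j k with rfl | hjk
      · rw [hmj, mul_zero]
      · exact mul_nonneg (hP2 j k hjk) (abs_nonneg _)
    have hrow0 : ∑ k, A j k * m k = 0 := by
      have := congrFun hAm j
      simpa [Matrix.mulVec, dotProduct] using this
    have hik : A j i * m i = 0 :=
      (Finset.sum_eq_zero_iff_of_nonneg fun k _ => hterm k).mp hrow0 i (Finset.mem_univ i)
    have : 0 < A j i * m i := mul_pos (hsymA j i ▸ hAij) hiI
    linarith
  · rintro ⟨m, hm, hAm⟩
    have hNeg : (-A).PosSemidef := negPSD_of_nullvec hP1 hP2 hm hAm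
    have hle : ∀ i, hP1.eigenvalues i ≤ 0 := eigenvalues_nonpos_of_negPSD hP1 hNeg
    have hdet : A.det = 0 := by
      rw [← Matrix.exists_mulVec_eq_zero_iff]
      refine ⟨m, ?_, hAm⟩
      intro h0
      have h1 : m ⟨0, hN⟩ = 0 := by simpa using congrFun h0 ⟨0, hN⟩
      exact absurd h1 (hm ⟨0, hN⟩).ne'
    have hprod : ∏ i, hP1.eigenvalues i = 0 := by
      have := hP1.det_eq_prod_eigenvalues
      rw [hdet] at this
      exact_mod_cast this.symm
    obtain ⟨i0, _, hi0⟩ := Finset.prod_eq_zero_iff.mp hprod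
    refine le_antisymm (ciSup_le hle) ?_
    calc (0:ℝ) = hP1.eigenvalues i0 := hi0.symm
      _ ≤ ⨆ i, hP1.eigenvalues i := le_ciSup hbdd i0
end

section
/- Let N be a positive integer and let A be a real N×N matrix satisfying properties (P1)–(P3), and assume in addition that every entry of A is an integer. Then the largest eigenvalue λ(A) of A is strictly positive if and only if there exists a vector m ∈ ℤ_+^N such that A·m ∈ ℝ_+^N (i.e., every entry of A·m is strictly positive). -/
open Matrix

lemma aux_posSemidef {n : ℕ} (hn : 0 < n) (A : Matrix (Fin n) (Fin n) ℝ)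
    (hA : A.IsHermitian) :
    ((⨆ i, hA.eigenvalues i) • (1 : Matrix (Fin n) (Fin n) ℝ) - A).PosSemidef := by
  haveI : Nonempty (Fin n) := ⟨⟨0, hn⟩⟩
  set μ := ⨆ i, hA.eigenvalues i with hμ
  have hbd : ∀ i, hA.eigenvalues i ≤ μ := fun i =>
    le_ciSup (Set.finite_range _).bddAbove i
  have hdiag : (Matrix.diagonal (fun i => μ - hA.eigenvalues i)).PosSemidef :=
    posSemidef_diagonal_iff.mpr fun i => sub_nonneg.mpr (hbd i)
  have key := hdiag.mul_mul_conjTranspose_same (hA.eigenvectorUnitary : Matrix (Fin n) (Fin n) ℝ)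
  have hUU : (hA.eigenvectorUnitary : Matrix (Fin n) (Fin n) ℝ) *
      (hA.eigenvectorUnitary : Matrix (Fin n) (Fin n) ℝ)ᴴ = 1 := by
    rw [← Matrix.star_eq_conjTranspose]
    exact (Matrix.mem_unitaryGroup_iff).mp (hA.eigenvectorUnitary).2
  have hspec : A = (hA.eigenvectorUnitary : Matrix (Fin n) (Fin n) ℝ) *
      Matrix.diagonal hA.eigenvalues * (hA.eigenvectorUnitary : Matrix (Fin n) (Fin n) ℝ)ᴴ := by
    have := hA.spectral_theorem
    simpa [Matrix.star_eq_conjTranspose] using this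
  have hEq : (hA.eigenvectorUnitary : Matrix (Fin n) (Fin n) ℝ) *
      Matrix.diagonal (fun i => μ - hA.eigenvalues i) *
      (hA.eigenvectorUnitary : Matrix (Fin n) (Fin n) ℝ)ᴴ = μ • 1 - A := by
    have h1 : Matrix.diagonal (fun i => μ - hA.eigenvalues i) =
        μ • (1 : Matrix (Fin n) (Fin n) ℝ) - Matrix.diagonal hA.eigenvalues := by
      rw [Matrix.smul_one_eq_diagonal, ← Matrix.diagonal_sub]
    rw [h1, Matrix.mul_sub, Matrix.sub_mul, ← hspec, Matrix.mul_smul, Matrix.smul_mul,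
      Matrix.mul_one, hUU]
  rwa [hEq] at key

lemma aux_rayleigh_s3 {n : ℕ} (hn : 0 < n) (A : Matrix (Fin n) (Fin n) ℝ)
    (hA : A.IsHermitian) (x : Fin n → ℝ) :
    x ⬝ᵥ (A *ᵥ x) ≤ (⨆ i, hA.eigenvalues i) * (x ⬝ᵥ x) := by
  have h := (aux_posSemidef hn A hA).dotProduct_mulVec_nonneg x
  rw [star_trivial, Matrix.sub_mulVec, dotProduct_sub, smul_mulVec,
    Matrix.one_mulVec, dotProduct_smul] at h
  simpa [smul_eq_mul] using sub_nonneg.mp h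

-- forward: positive eigenvector
lemma aux_posvec {n : ℕ} (hn : 0 < n) (A : Matrix (Fin n) (Fin n) ℝ)
    (hA : A.IsHermitian)
    (hP2 : ∀ i j : Fin n, i ≠ j → 0 ≤ A i j)
    (hP3 : ∀ I : Set (Fin n), I.Nonempty → Iᶜ.Nonempty →
      ∃ i ∈ I, ∃ j ∈ Iᶜ, 0 < A i j)
    (hpos : 0 < ⨆ i, hA.eigenvalues i) :
    ∃ w : Fin n → ℝ, (∀ j, 0 < w j) ∧ (∀ i, 0 < (A *ᵥ w) i) := by
  haveI : Nonempty (Fin n) := ⟨⟨0, hn⟩⟩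
  set μ := ⨆ i, hA.eigenvalues i with hμ
  obtain ⟨i0, hi0⟩ := exists_eq_ciSup_of_finite (f := hA.eigenvalues)
  set v : Fin n → ℝ := ⇑(hA.eigenvectorBasis i0) with hv
  have hAv : A *ᵥ v = μ • v := by
    rw [hv, hA.mulVec_eigenvectorBasis, hi0]
  have hvne : v ≠ 0 := by
    intro h
    exact hA.eigenvectorBasis.orthonormal.ne_zero i0 (by ext j; exact congrFun h j)
  set w : Fin n → ℝ := fun j => |v j| with hw
  have hwnn : ∀ j, 0 ≤ w j := fun j => abs_nonneg _
  have h1 : w ⬝ᵥ w = v ⬝ᵥ v := by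
    unfold dotProduct
    exact Finset.sum_congr rfl fun j _ => abs_mul_abs_self (v j)
  have h2 : v ⬝ᵥ (A *ᵥ v) = μ * (v ⬝ᵥ v) := by
    rw [hAv, dotProduct_smul, smul_eq_mul]
  have h3 : v ⬝ᵥ (A *ᵥ v) ≤ w ⬝ᵥ (A *ᵥ w) := by
    simp only [dotProduct, Matrix.mulVec, Finset.mul_sum, hw]
    refine Finset.sum_le_sum fun i _ => Finset.sum_le_sum fun j _ => ?_
    rcases eq_or_ne i j with rfl | hij
    · apply le_of_eq
      ring_nf
      rw [sq_abs]
      ring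
    · calc v i * (A i j * v j) = A i j * (v i * v j) := by ring
        _ ≤ A i j * (|v i| * |v j|) :=
          mul_le_mul_of_nonneg_left (by rw [← abs_mul]; exact le_abs_self _) (hP2 i j hij)
        _ = |v i| * (A i j * |v j|) := by ring
  have hvv : 0 < v ⬝ᵥ v := by
    have hne : v ⬝ᵥ v ≠ 0 := fun h => hvne
      ((dotProduct_star_self_eq_zero).mp (by rwa [star_trivial]))
    exact lt_of_le_of_ne (Finset.sum_nonneg fun j _ => mul_self_nonneg _) (Ne.symm hne)
  have h4 : w ⬝ᵥ (A *ᵥ w) ≤ μ * (w ⬝ᵥ w) := aux_rayleigh_s3 hn A hA w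
  have h5 : w ⬝ᵥ (A *ᵥ w) = μ * (w ⬝ᵥ w) := le_antisymm h4 (by rw [h1, ← h2]; exact h3)
  have h6 : A *ᵥ w = μ • w := by
    have hps := aux_posSemidef hn A hA
    have h0 : star w ⬝ᵥ ((μ • (1 : Matrix (Fin n) (Fin n) ℝ) - A) *ᵥ w) = 0 := by
      rw [star_trivial, Matrix.sub_mulVec, dotProduct_sub, smul_mulVec,
        Matrix.one_mulVec, dotProduct_smul, smul_eq_mul, h5]
      ring
    have hker := (hps.dotProduct_mulVec_zero_iff w).mp h0
    rw [Matrix.sub_mulVec, smul_mulVec, Matrix.one_mulVec, sub_eq_zero] at hker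
    exact hker.symm
  have hwne : ∃ j, 0 < w j := by
    by_contra h; push_neg at h
    apply hvne; funext j
    exact abs_eq_zero.mp (le_antisymm (h j) (hwnn j))
  have hall : ∀ j, 0 < w j := by
    by_contra hc; push_neg at hc
    obtain ⟨j0, hj0⟩ := hc
    set I : Set (Fin n) := {j | 0 < w j} with hIdef
    obtain ⟨i, hiI, j, hjIc, hij⟩ := hP3 I hwne ⟨j0, fun h => absurd h (not_lt.mpr hj0)⟩
    have hwj : w j = 0 := le_antisymm (not_lt.mp hjIc) (hwnn j)
    have hterm : 0 < (A *ᵥ w) j := by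
      refine Finset.sum_pos' (fun k _ => ?_) ⟨i, Finset.mem_univ i, ?_⟩
      · rcases eq_or_ne k j with rfl | hkj
        · rw [hwj]; simp
        · exact mul_nonneg (hP2 j k (Ne.symm hkj)) (hwnn k)
      · show 0 < A j i * w i
        have hAji : A j i = A i j := by
          conv_lhs => rw [← hA]
          simp [Matrix.conjTranspose_apply]
        rw [hAji]; exact mul_pos hij hiI
    rw [h6] at hterm
    simp [hwj] at hterm
  refine ⟨w, hall, fun i => ?_⟩
  rw [h6, Pi.smul_apply, smul_eq_mul]
  exact mul_pos hpos (hall i)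

lemma aux_rat {n : ℕ} (hn : 0 < n) (A : Matrix (Fin n) (Fin n) ℝ)
    (w : Fin n → ℝ) (hw : ∀ j, 0 < w j) (hAw : ∀ i, 0 < (A *ᵥ w) i) :
    ∃ m : Fin n → ℝ, (∀ i, ∃ z : ℤ, 0 < z ∧ m i = (z : ℝ)) ∧ (∀ i, 0 < (A *ᵥ m) i) := by
  haveI : Nonempty (Fin n) := ⟨⟨0, hn⟩⟩
  obtain ⟨i0, hi0⟩ := Finite.exists_min (fun i => (A *ᵥ w) i)
  set ε := (A *ᵥ w) i0 with hε
  have hεpos : 0 < ε := hAw i0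
  set C := (∑ i, ∑ j, |A i j|) + 1 with hC
  have hCpos : 0 < C := by
    have : (0:ℝ) ≤ ∑ i, ∑ j, |A i j| :=
      Finset.sum_nonneg fun i _ => Finset.sum_nonneg fun j _ => abs_nonneg _
    linarith
  set δ := ε / (2 * C) with hδ
  have hδpos : 0 < δ := by positivity
  have hrow : ∀ i, (∑ k, |A i k|) ≤ C := by
    intro i
    have h1 : (∑ k, |A i k|) ≤ ∑ i', ∑ k, |A i' k| :=
      Finset.single_le_sum (f := fun i' => ∑ k, |A i' k|)
        (fun i' _ => Finset.sum_nonneg fun k _ => abs_nonneg _) (Finset.mem_univ i)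
    linarith
  choose q hq1 hq2 using fun j => exists_rat_btwn (lt_add_of_pos_right (w j) hδpos)
  set D : ℕ := ∏ j, (q j).den with hD
  have hDpos : 0 < D := Finset.prod_pos fun j _ => (q j).pos
  set qR : Fin n → ℝ := fun j => (q j : ℝ) with hqR
  set m : Fin n → ℝ := fun j => (D : ℝ) * qR j with hm
  have hqpos : ∀ j, 0 < qR j := fun j => (hw j).trans (hq1 j)
  have hm' : m = (D : ℝ) • qR := funext fun j => rfl
  have hAq : ∀ i, 0 < (A *ᵥ qR) i := by
    intro i
    have e1 : (A *ᵥ qR) i - (A *ᵥ w) i = ∑ k, A i k * (qR k - w k) := by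
      simp [Matrix.mulVec, dotProduct, mul_sub, Finset.sum_sub_distrib]
    have key : |(A *ᵥ qR) i - (A *ᵥ w) i| ≤ ε / 2 := by
      rw [e1]
      calc |∑ k, A i k * (qR k - w k)| ≤ ∑ k, |A i k * (qR k - w k)| :=
            Finset.abs_sum_le_sum_abs _ _
        _ ≤ ∑ k, |A i k| * δ := by
            refine Finset.sum_le_sum fun k _ => ?_
            rw [abs_mul]
            refine mul_le_mul_of_nonneg_left ?_ (abs_nonneg _)
            rw [abs_of_nonneg (by linarith [hq1 k] : (0:ℝ) ≤ qR k - w k)]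
            linarith [hq2 k]
        _ = (∑ k, |A i k|) * δ := (Finset.sum_mul _ _ _).symm
        _ ≤ C * δ := mul_le_mul_of_nonneg_right (hrow i) hδpos.le
        _ = ε / 2 := by
            rw [hδ]
            field_simp
    have habs := abs_le.mp key
    have := hi0 i
    linarith [habs.1]
  refine ⟨m, fun j => ?_, fun i => ?_⟩
  · have hdvd : ((q j).den : ℤ) ∣ (D : ℤ) := Int.natCast_dvd_natCast.mpr
      (Finset.dvd_prod_of_mem (fun j => (q j).den) (Finset.mem_univ j))
    obtain ⟨c, hc⟩ := hdvd
    have hden : ((q j).den : ℝ) ≠ 0 := Nat.cast_ne_zero.mpr (q j).pos.ne'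
    have hcast : (D : ℝ) = ((q j).den : ℝ) * (c : ℝ) := by exact_mod_cast hc
    have hmj : m j = ((c * (q j).num : ℤ) : ℝ) := by
      show (D : ℝ) * qR j = _
      rw [hcast, hqR]
      push_cast
      rw [Rat.cast_def]
      field_simp
    refine ⟨c * (q j).num, ?_, hmj⟩
    have : (0:ℝ) < ((c * (q j).num : ℤ) : ℝ) := by
      rw [← hmj]
      exact mul_pos (Nat.cast_pos.mpr hDpos) (hqpos j)
    exact_mod_cast this
  · rw [hm', Matrix.mulVec_smul, Pi.smul_apply, smul_eq_mul]
    exact mul_pos (Nat.cast_pos.mpr hDpos) (hAq i)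

/-- Koike–Uehara, Proposition 3.2 (i), integral version.
For a real `N × N` matrix `A` (with `N > 0`) satisfying (P1)–(P3) and having
integer entries, the largest eigenvalue `λ(A)` is strictly positive if and
only if there exists `m ∈ ℤ₊^N` (all entries strictly positive integers)
such that all entries of `A · m` are strictly positive. -/
theorem largest_eigenvalue_pos_iff_int
    (N : ℕ) (hN : 0 < N) (A : Matrix (Fin N) (Fin N) ℝ)
    (hP1 : A.IsHermitian)
    (hP2 : ∀ i j : Fin N, i ≠ j → 0 ≤ A i j)
    (hP3 : ∀ I : Set (Fin N), I.Nonempty → Iᶜ.Nonempty →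
      ∃ i ∈ I, ∃ j ∈ Iᶜ, 0 < A i j)
    (hint : ∀ i j : Fin N, ∃ z : ℤ, A i j = (z : ℝ)) :
    (0 < ⨆ i, hP1.eigenvalues i) ↔
      ∃ m : Fin N → ℝ, (∀ i, ∃ z : ℤ, 0 < z ∧ m i = (z : ℝ)) ∧
        (∀ i, 0 < A.mulVec m i) := by
  constructor
  · intro h
    obtain ⟨w, hw, hAw⟩ := aux_posvec hN A hP1 hP2 hP3 h
    exact aux_rat hN A w hw hAw
  · rintro ⟨m, hm1, hm2⟩
    by_contra h
    push_neg at h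
    haveI : Nonempty (Fin N) := ⟨⟨0, hN⟩⟩
    have hmpos : ∀ i, 0 < m i := by
      intro i
      obtain ⟨z, hz, he⟩ := hm1 i
      rw [he]
      exact_mod_cast hz
    have h1 : 0 < m ⬝ᵥ (A *ᵥ m) :=
      Finset.sum_pos (fun i _ => mul_pos (hmpos i) (hm2 i)) Finset.univ_nonempty
    have h2 := aux_rayleigh_s3 hN A hP1 m
    have h3 : 0 ≤ m ⬝ᵥ m := Finset.sum_nonneg fun i _ => mul_self_nonneg _
    nlinarith
end

section
/- Let N be a positive integer and let A be a real N×N matrix satisfying properties (P1)–(P3), and assume in addition that every entry of A is an integer. Then the largest eigenvalue λ(A) of A equals 0 if and only if there exists a vector m ∈ ℤ_+^N such that A·m = 0. -/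
open Matrix Finset

open Matrix Finset in
/-- Quadratic form is nonpositive when a strictly positive vector lies in the kernel. -/
lemma aux_quad_nonpos {N : ℕ} (A : Matrix (Fin N) (Fin N) ℝ)
    (hsym : A.IsHermitian) (hP2 : ∀ i j : Fin N, i ≠ j → 0 ≤ A i j)
    (m : Fin N → ℝ) (hm : ∀ i, 0 < m i) (hker : A.mulVec m = 0)
    (x : Fin N → ℝ) : x ⬝ᵥ A.mulVec x ≤ 0 := by
  have hsymm : ∀ i j, A j i = A i j := fun i j => by
    have := congrFun (congrFun hsym.symm j) i
    simpa [Matrix.conjTranspose_apply] using this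
  set y : Fin N → ℝ := fun i => x i / m i with hy
  have hxy : ∀ i, x i = m i * y i := fun i => by
    rw [hy]; field_simp [(hm i).ne']
  have hAm : ∀ i, ∑ j, A i j * m j = 0 := by
    intro i
    have := congrFun hker i
    simpa [Matrix.mulVec, dotProduct] using this
  have hq : x ⬝ᵥ A.mulVec x = ∑ i, ∑ j, A i j * x i * x j := by
    simp only [dotProduct, Matrix.mulVec, Finset.mul_sum]
    exact Finset.sum_congr rfl fun i _ => Finset.sum_congr rfl fun j _ => by ring
  have expand : ∀ i j : Fin N, A i j * m i * m j * (y i - y j) ^ 2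
      = (A i j * m j) * (m i * y i ^ 2) + (A i j * m i) * (m j * y j ^ 2)
        - 2 * (A i j * x i * x j) := by
    intro i j
    rw [hxy i, hxy j]; ring
  have h1 : ∑ i, ∑ j, (A i j * m j) * (m i * y i ^ 2) = 0 := by
    refine Finset.sum_eq_zero fun i _ => ?_
    rw [← Finset.sum_mul, hAm i, zero_mul]
  have h2 : ∑ i, ∑ j, (A i j * m i) * (m j * y j ^ 2) = 0 := by
    rw [Finset.sum_comm]
    refine Finset.sum_eq_zero fun j _ => ?_
    have hz : ∑ i, A i j * m i = 0 := by
      have : ∑ i, A i j * m i = ∑ i, A j i * m i :=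
        Finset.sum_congr rfl fun i _ => by rw [hsymm j i]
      rw [this, hAm j]
    rw [← Finset.sum_mul, hz, zero_mul]
  have key : ∑ i, ∑ j, A i j * m i * m j * (y i - y j) ^ 2
      = -2 * (x ⬝ᵥ A.mulVec x) := by
    rw [hq]
    calc ∑ i, ∑ j, A i j * m i * m j * (y i - y j) ^ 2
        = ∑ i, ∑ j, ((A i j * m j) * (m i * y i ^ 2) + (A i j * m i) * (m j * y j ^ 2)
            - 2 * (A i j * x i * x j)) :=
          Finset.sum_congr rfl fun i _ => Finset.sum_congr rfl fun j _ => expand i j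
      _ = (∑ i, ∑ j, (A i j * m j) * (m i * y i ^ 2))
            + (∑ i, ∑ j, (A i j * m i) * (m j * y j ^ 2))
            - 2 * ∑ i, ∑ j, A i j * x i * x j := by
          simp [Finset.sum_add_distrib, Finset.sum_sub_distrib, Finset.mul_sum]
      _ = -2 * ∑ i, ∑ j, A i j * x i * x j := by rw [h1, h2]; ring
  have hS : 0 ≤ ∑ i, ∑ j, A i j * m i * m j * (y i - y j) ^ 2 := by
    refine Finset.sum_nonneg fun i _ => Finset.sum_nonneg fun j _ => ?_
    rcases eq_or_ne i j with rfl | hij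
    · simp
    · exact mul_nonneg (mul_nonneg (mul_nonneg (hP2 i j hij) (hm i).le) (hm j).le)
        (sq_nonneg _)
  linarith [key ▸ hS]

open Matrix Finset in
/-- If `-A` is positive semidefinite and `v ≠ 0` is in the kernel of `A`, then under
(P2)–(P3) the entrywise absolute value of `v` is a strictly positive kernel vector. -/
lemma aux_pos_ker {N : ℕ} (A : Matrix (Fin N) (Fin N) ℝ)
    (hsym : A.IsHermitian) (hP2 : ∀ i j : Fin N, i ≠ j → 0 ≤ A i j)
    (hP3 : ∀ I : Set (Fin N), I.Nonempty → Iᶜ.Nonempty →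
      ∃ i ∈ I, ∃ j ∈ Iᶜ, 0 < A i j)
    (hps : (-A).PosSemidef)
    (v : Fin N → ℝ) (hv : A.mulVec v = 0) (hv0 : v ≠ 0) :
    A.mulVec (fun i => |v i|) = 0 ∧ ∀ i, 0 < |v i| := by
  have hsymm : ∀ i j, A j i = A i j := fun i j => by
    have := congrFun (congrFun hsym.symm j) i
    simpa [Matrix.conjTranspose_apply] using this
  have hstar : ∀ z : Fin N → ℝ, star z = z := fun z => funext fun i => star_trivial _
  have hns : ∀ z : Fin N → ℝ, z ⬝ᵥ A.mulVec z ≤ 0 := by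
    intro z
    have := hps.dotProduct_mulVec_nonneg z
    rw [hstar, Matrix.neg_mulVec, dotProduct_neg] at this
    linarith
  set w : Fin N → ℝ := fun i => |v i| with hw
  have hqv : v ⬝ᵥ A.mulVec v = 0 := by rw [hv, dotProduct_zero]
  have hexp : ∀ z : Fin N → ℝ, z ⬝ᵥ A.mulVec z = ∑ i, ∑ j, A i j * z i * z j := by
    intro z
    simp only [dotProduct, Matrix.mulVec, Finset.mul_sum]
    exact Finset.sum_congr rfl fun i _ => Finset.sum_congr rfl fun j _ => by ring
  have hcmp : v ⬝ᵥ A.mulVec v ≤ w ⬝ᵥ A.mulVec w := by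
    rw [hexp v, hexp w]
    refine Finset.sum_le_sum fun i _ => Finset.sum_le_sum fun j _ => ?_
    rcases eq_or_ne i j with rfl | hij
    · simp [hw, mul_assoc, abs_mul_abs_self]
    · have h1 : v i * v j ≤ |v i| * |v j| := by
        rw [← abs_mul]; exact le_abs_self _
      calc A i j * v i * v j = A i j * (v i * v j) := by ring
        _ ≤ A i j * (|v i| * |v j|) := mul_le_mul_of_nonneg_left h1 (hP2 i j hij)
        _ = A i j * w i * w j := by simp [hw]; ring
  have hqw : w ⬝ᵥ A.mulVec w = 0 := le_antisymm (hns w) (hqv ▸ hcmp)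
  have hkerw : A.mulVec w = 0 := by
    have h0 : star w ⬝ᵥ (-A) *ᵥ w = 0 := by
      rw [hstar, Matrix.neg_mulVec, dotProduct_neg, hqw, neg_zero]
    have := (hps.dotProduct_mulVec_zero_iff w).mp h0
    rw [Matrix.neg_mulVec, neg_eq_zero] at this
    exact this
  refine ⟨hkerw, ?_⟩
  by_contra hcon
  push_neg at hcon
  obtain ⟨j0, hj0⟩ := hcon
  have hj0' : v j0 = 0 := by
    have := abs_nonneg (v j0)
    have : |v j0| = 0 := le_antisymm hj0 this
    exact abs_eq_zero.mp this
  set I : Set (Fin N) := {i | v i ≠ 0} with hI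
  have hIne : I.Nonempty := by
    obtain ⟨i, hi⟩ := Function.ne_iff.mp hv0
    exact ⟨i, hi⟩
  have hIcne : Iᶜ.Nonempty := ⟨j0, by simp [hI, hj0']⟩
  obtain ⟨i, hiI, j, hjIc, hij⟩ := hP3 I hIne hIcne
  have hvj : v j = 0 := not_not.mp hjIc
  have hne : i ≠ j := fun h => hjIc (h ▸ hiI)
  have hsum : ∑ k, A j k * w k = 0 := by
    have := congrFun hkerw j
    simpa [Matrix.mulVec, dotProduct] using this
  have hpos : 0 < ∑ k, A j k * w k := by
    refine Finset.sum_pos' (fun k _ => ?_) ⟨i, Finset.mem_univ i, ?_⟩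
    · rcases eq_or_ne j k with rfl | h
      · simp [hw, hvj]
      · exact mul_nonneg (hP2 j k h) (abs_nonneg _)
    · have hAji : 0 < A j i := hsymm j i ▸ hij
      exact mul_pos hAji (abs_pos.mpr hiI)
  exact absurd hsum (ne_of_gt hpos)

open Matrix in
lemma aux_eig_nonpos {N : ℕ} {A : Matrix (Fin N) (Fin N) ℝ} (hP1 : A.IsHermitian)
    (hps : (-A).PosSemidef) (i : Fin N) : hP1.eigenvalues i ≤ 0 := by
  have h1 : hP1.eigenvalues i ∈ spectrum ℝ A := hP1.eigenvalues_mem_spectrum_real i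
  have h2 : -hP1.eigenvalues i ∈ spectrum ℝ (-A) := by
    rw [← spectrum.neg_eq]
    exact Set.neg_mem_neg.mpr h1
  rw [hps.1.spectrum_real_eq_range_eigenvalues] at h2
  obtain ⟨j, hj⟩ := h2
  have h3 := hps.eigenvalues_nonneg j
  rw [hj] at h3
  linarith

open Matrix in
lemma aux_ps_of_eig {N : ℕ} {A : Matrix (Fin N) (Fin N) ℝ} (hP1 : A.IsHermitian)
    (h : ∀ i, hP1.eigenvalues i ≤ 0) : (-A).PosSemidef := by
  apply hP1.neg.posSemidef_iff_eigenvalues_nonneg.mpr; simp only [Pi.le_def, Pi.zero_apply]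
  intro i
  have h1 : hP1.neg.eigenvalues i ∈ spectrum ℝ (-A) :=
    hP1.neg.eigenvalues_mem_spectrum_real i
  rw [← spectrum.neg_eq] at h1
  have h2 : -(hP1.neg.eigenvalues i) ∈ spectrum ℝ A := Set.mem_neg.mp h1
  rw [hP1.spectrum_real_eq_range_eigenvalues] at h2
  obtain ⟨j, hj⟩ := h2
  have := h j
  rw [hj] at this
  linarith

/-- Koike–Uehara, Proposition 3.2 (ii), integral version.
For a real `N × N` matrix `A` (with `N > 0`) satisfying (P1)–(P3) and having
integer entries, the largest eigenvalue `λ(A)` equals `0` if and only if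
there exists `m ∈ ℤ₊^N` (all entries strictly positive integers) such that
`A · m = 0`. -/
theorem largest_eigenvalue_eq_zero_iff_int
    (N : ℕ) (hN : 0 < N) (A : Matrix (Fin N) (Fin N) ℝ)
    (hP1 : A.IsHermitian)
    (hP2 : ∀ i j : Fin N, i ≠ j → 0 ≤ A i j)
    (hP3 : ∀ I : Set (Fin N), I.Nonempty → Iᶜ.Nonempty →
      ∃ i ∈ I, ∃ j ∈ Iᶜ, 0 < A i j)
    (hint : ∀ i j : Fin N, ∃ z : ℤ, A i j = (z : ℝ)) :
    ((⨆ i, hP1.eigenvalues i) = 0) ↔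
      ∃ m : Fin N → ℝ, (∀ i, ∃ z : ℤ, 0 < z ∧ m i = (z : ℝ)) ∧
        A.mulVec m = 0 := by
  haveI : Nonempty (Fin N) := Fin.pos_iff_nonempty.mp hN
  -- the rational (indeed integral) matrix underlying `A`
  choose zmat hzmat using hint
  set Z : Matrix (Fin N) (Fin N) ℚ := fun i j => ((zmat i j : ℤ) : ℚ) with hZdef
  have hZ : ∀ i j, A i j = ((Z i j : ℚ) : ℝ) := fun i j => by
    rw [hzmat i j, hZdef]; push_cast; ring
  have hAZ : Z.map (Rat.castHom ℝ) = A := by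
    ext i j
    simp [Matrix.map_apply, (hZ i j).symm]
  have hcast : ∀ r : Fin N → ℚ, Z.mulVec r = 0 →
      A.mulVec (fun i => ((r i : ℚ) : ℝ)) = 0 := by
    intro r hr
    funext i
    have hi := congrFun hr i
    simp only [Matrix.mulVec, dotProduct, Pi.zero_apply] at hi ⊢
    have : ∑ j, A i j * ((r j : ℚ) : ℝ) = ((∑ j, Z i j * r j : ℚ) : ℝ) := by
      push_cast
      exact Finset.sum_congr rfl fun j _ => by rw [hZ i j]
    rw [this, hi, Rat.cast_zero]
  constructor
  · -- forward direction
    intro hsup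
    have hub : ∀ i, hP1.eigenvalues i ≤ 0 := fun i =>
      hsup ▸ le_ciSup (Set.finite_range _).bddAbove i
    obtain ⟨ie, hie⟩ := exists_eq_ciSup_of_finite (f := hP1.eigenvalues)
    rw [hsup] at hie
    have hps := aux_ps_of_eig hP1 hub
    have hkv : A.mulVec ⇑(hP1.eigenvectorBasis ie) = 0 := by
      rw [hP1.mulVec_eigenvectorBasis, hie, zero_smul]
    have hv0 : ⇑(hP1.eigenvectorBasis ie) ≠ (0 : Fin N → ℝ) := by
      intro h
      exact hP1.eigenvectorBasis.orthonormal.ne_zero ie (by ext i; exact congrFun h i)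
    obtain ⟨v, hkv, hv0⟩ : ∃ v : Fin N → ℝ, A.mulVec v = 0 ∧ v ≠ 0 := ⟨_, hkv, hv0⟩
    obtain ⟨hkw, hwpos⟩ := aux_pos_ker A hP1 hP2 hP3 hps v hkv hv0
    set W : Fin N → ℝ := fun i => |v i| with hWdef
    have hker_all : ∀ u : Fin N → ℝ, A.mulVec u = 0 → u ≠ 0 → ∀ i, u i ≠ 0 := by
      intro u hu hu0 i
      have h := (aux_pos_ker A hP1 hP2 hP3 hps u hu hu0).2 i
      exact fun hc => by rw [hc] at h; simp at h
    set i0 : Fin N := ⟨0, hN⟩ with hi0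
    have hw0 : W ≠ 0 := fun h =>
      (hwpos i0).ne' (by rw [hWdef] at h; simpa using congrFun h i0)
    have hdet : A.det = 0 := Matrix.exists_mulVec_eq_zero_iff.mp ⟨W, hw0, hkw⟩
    have hdetZ : Z.det = 0 := by
      have h := RingHom.map_det (Rat.castHom ℝ) Z
      rw [RingHom.mapMatrix_apply, hAZ, hdet] at h
      have h2 : ((Z.det : ℚ) : ℝ) = 0 := by simpa using h
      exact_mod_cast h2
    obtain ⟨q, hq0, hqker⟩ := Matrix.exists_mulVec_eq_zero_iff.mpr hdetZ
    set u : Fin N → ℝ := fun i => ((q i : ℚ) : ℝ) with hu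
    have huker : A.mulVec u = 0 := hcast q hqker
    have hu0 : u ≠ 0 := by
      intro h
      apply hq0
      funext i
      have h2 : ((q i : ℚ) : ℝ) = 0 := by simpa [hu] using congrFun h i
      have h3 : (q i : ℚ) = 0 := by exact_mod_cast h2
      simpa using h3
    have hwne : W i0 ≠ 0 := (hwpos i0).ne'
    have hu'ker : A.mulVec (u - (u i0 / W i0) • W) = 0 := by
      rw [Matrix.mulVec_sub, Matrix.mulVec_smul, huker, hkw, smul_zero, sub_zero]
    have hu'0 : (u - (u i0 / W i0) • W) i0 = 0 := by
      simp only [Pi.sub_apply, Pi.smul_apply, smul_eq_mul]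
      rw [div_mul_cancel₀ _ hwne, sub_self]
    have hueq : u = (u i0 / W i0) • W := by
      by_contra h
      have hne : u - (u i0 / W i0) • W ≠ 0 := fun h0 => h (by rwa [sub_eq_zero] at h0)
      exact hker_all _ hu'ker hne i0 hu'0
    have hc0 : u i0 / W i0 ≠ 0 := div_ne_zero (hker_all u huker hu0 i0) hwne
    have hcompo : ∀ i, u i = (u i0 / W i0) * W i := fun i => by
      conv_lhs => rw [hueq]
      simp
    obtain ⟨p, hpker, hppos⟩ : ∃ p : Fin N → ℚ, Z.mulVec p = 0 ∧ ∀ i, 0 < p i := by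
      rcases hc0.lt_or_gt with hc | hc
      · refine ⟨-q, by rw [Matrix.mulVec_neg, hqker, neg_zero], fun i => ?_⟩
        have h1 : u i < 0 := by rw [hcompo i]; exact mul_neg_of_neg_of_pos hc (hwpos i)
        have h2 : (q i : ℝ) < 0 := h1
        have h3 : q i < 0 := by exact_mod_cast h2
        simpa using h3
      · refine ⟨q, hqker, fun i => ?_⟩
        have h1 : 0 < u i := by rw [hcompo i]; exact mul_pos hc (hwpos i)
        have h2 : (0 : ℝ) < (q i : ℝ) := h1
        exact_mod_cast h2
    -- clear denominators
    set zf : Fin N → ℤ :=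
      fun i => (p i).num * ∏ j ∈ Finset.univ.erase i, ((p j).den : ℤ) with hzf
    have hzfpos : ∀ i, 0 < zf i := fun i => by
      rw [hzf]
      refine mul_pos (Rat.num_pos.mpr (hppos i)) (Finset.prod_pos fun j _ => ?_)
      exact_mod_cast (p j).pos
    have hzQ : ∀ i, ((zf i : ℤ) : ℚ) = p i * ∏ j, ((p j).den : ℚ) := by
      intro i
      have hnum : (((p i).num : ℤ) : ℚ) = p i * ((p i).den : ℚ) :=
        (div_eq_iff (by exact_mod_cast (p i).den_ne_zero)).mp (Rat.num_div_den (p i))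
      have hsplit : (∏ j, ((p j).den : ℚ))
          = ((p i).den : ℚ) * ∏ j ∈ Finset.univ.erase i, ((p j).den : ℚ) :=
        (Finset.mul_prod_erase Finset.univ (fun j => ((p j).den : ℚ))
          (Finset.mem_univ i)).symm
      rw [hzf]
      push_cast
      rw [hnum, hsplit]
      ring
    have hmcast : (fun i => ((zf i : ℤ) : ℝ))
        = (((∏ j, ((p j).den : ℚ) : ℚ) : ℝ)) • (fun i => ((p i : ℚ) : ℝ)) := by
      funext i
      simp only [Pi.smul_apply, smul_eq_mul]
      rw [show ((zf i : ℤ) : ℝ) = (((zf i : ℤ) : ℚ) : ℝ) by push_cast; ring, hzQ i]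
      push_cast; ring
    refine ⟨fun i => ((zf i : ℤ) : ℝ), fun i => ⟨zf i, hzfpos i, rfl⟩, ?_⟩
    rw [hmcast, Matrix.mulVec_smul, hcast p hpker, smul_zero]
  · -- reverse direction
    rintro ⟨m, hmz, hker⟩
    have hmpos : ∀ i, 0 < m i := fun i => by
      obtain ⟨z, hz, he⟩ := hmz i
      rw [he]; exact_mod_cast hz
    have hns := aux_quad_nonpos A hP1 hP2 m hmpos hker
    have hps : (-A).PosSemidef := by
      refine .of_dotProduct_mulVec_nonneg hP1.neg fun x => ?_
      have hstar : star x = x := funext fun i => star_trivial _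
      rw [hstar, Matrix.neg_mulVec, dotProduct_neg]
      linarith [hns x]
    have hub : ∀ i, hP1.eigenvalues i ≤ 0 := aux_eig_nonpos hP1 hps
    have hm0 : m ≠ 0 := fun h => by
      have := hmpos ⟨0, hN⟩
      rw [h] at this; simp at this
    have hdet : A.det = 0 := Matrix.exists_mulVec_eq_zero_iff.mp ⟨m, hm0, hker⟩
    have hprod := hP1.det_eq_prod_eigenvalues
    rw [hdet] at hprod
    obtain ⟨i, -, hi⟩ := Finset.prod_eq_zero_iff.mp hprod.symm
    have hi' : hP1.eigenvalues i = 0 := by exact_mod_cast hi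
    exact le_antisymm (ciSup_le hub) (hi' ▸ le_ciSup (Set.finite_range _).bddAbove i)
end

section
/- Let N be a positive integer and let A be a real N×N matrix satisfying properties (P1)–(P3), and assume in addition that every entry of A is an integer. Then the largest eigenvalue λ(A) of A is strictly negative if and only if there exists a vector m ∈ ℤ_+^N such that −A·m ∈ ℝ_+^N (i.e., every entry of A·m is strictly negative). -/
open Matrix

lemma psd_aux (N : ℕ) (A : Matrix (Fin N) (Fin N) ℝ) (hP1 : A.IsHermitian) :
    (((⨆ i, hP1.eigenvalues i) • (1 : Matrix (Fin N) (Fin N) ℝ)) - A).PosSemidef := by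
  set lam := ⨆ i, hP1.eigenvalues i with hlam
  have h1 : ∀ i, hP1.eigenvalues i ≤ lam :=
    fun i => le_ciSup (Set.Finite.bddAbove (Set.finite_range _)) i
  have hU : (hP1.eigenvectorUnitary : Matrix (Fin N) (Fin N) ℝ) *
      (star hP1.eigenvectorUnitary : Matrix (Fin N) (Fin N) ℝ) = 1 :=
    Matrix.mem_unitaryGroup_iff.mp hP1.eigenvectorUnitary.2
  have hdiag : diagonal (fun i => lam - hP1.eigenvalues i) =
      lam • (1 : Matrix (Fin N) (Fin N) ℝ) - diagonal (RCLike.ofReal ∘ hP1.eigenvalues) := by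
    rw [← diagonal_sub, ← smul_one_eq_diagonal]
    simp [Function.comp]
  have key : lam • (1 : Matrix (Fin N) (Fin N) ℝ) - A =
      (hP1.eigenvectorUnitary : Matrix (Fin N) (Fin N) ℝ) *
        diagonal (fun i => lam - hP1.eigenvalues i) *
        (star hP1.eigenvectorUnitary : Matrix (Fin N) (Fin N) ℝ) := by
    conv_lhs => rw [hP1.spectral_theorem]
    rw [hdiag, Matrix.mul_sub, Matrix.sub_mul]
    congr 1
    rw [Matrix.mul_smul, Matrix.smul_mul, Matrix.mul_one, hU]
  rw [key, Matrix.star_eq_conjTranspose]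
  exact (posSemidef_diagonal_iff.mpr (fun i => sub_nonneg.mpr (h1 i))).mul_mul_conjTranspose_same _

lemma eig_aux(N : ℕ) (hN : 0 < N) (A : Matrix (Fin N) (Fin N) ℝ) (hP1 : A.IsHermitian)
    (hP2 : ∀ i j : Fin N, i ≠ j → 0 ≤ A i j) :
    ∃ u : Fin N → ℝ, u ≠ 0 ∧ (∀ i, 0 ≤ u i) ∧
      A.mulVec u = (⨆ i, hP1.eigenvalues i) • u := by
  have : Nonempty (Fin N) := ⟨⟨0, hN⟩⟩
  set lam := ⨆ i, hP1.eigenvalues i with hlamdef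
  obtain ⟨i₀, hi₀⟩ := Finite.exists_max hP1.eigenvalues
  have hlam : lam = hP1.eigenvalues i₀ :=
    le_antisymm (ciSup_le hi₀) (le_ciSup (Set.Finite.bddAbove (Set.finite_range _)) i₀)
  set v : Fin N → ℝ := ⇑(hP1.eigenvectorBasis i₀) with hvdef
  have hv : A.mulVec v = lam • v := by rw [hP1.mulVec_eigenvectorBasis, hlam]
  have hv0 : v ≠ 0 := by
    intro h
    apply hP1.eigenvectorBasis.orthonormal.ne_zero i₀
    ext i
    exact congrFun h i
  refine ⟨fun i => |v i|, ?_, fun i => abs_nonneg _, ?_⟩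
  · intro h
    apply hv0
    ext i
    have := congrFun h i
    simpa using abs_eq_zero.mp this
  set u : Fin N → ℝ := fun i => |v i| with hudef
  -- Rayleigh inequality from PSD
  have hpsd := psd_aux N A hP1
  have hray : ∀ x : Fin N → ℝ, x ⬝ᵥ A.mulVec x ≤ lam * (x ⬝ᵥ x) := by
    intro x
    have := hpsd.dotProduct_mulVec_nonneg x
    rw [sub_mulVec, dotProduct_sub, smul_mulVec, one_mulVec, dotProduct_smul] at this
    simp only [star_trivial, smul_eq_mul] at this
    linarith
  -- v ⬝ᵥ A v ≤ u ⬝ᵥ A u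
  have habs : v ⬝ᵥ A.mulVec v ≤ u ⬝ᵥ A.mulVec u := by
    simp only [dotProduct, mulVec, Finset.mul_sum]
    refine Finset.sum_le_sum fun i _ => Finset.sum_le_sum fun j _ => ?_
    rcases eq_or_ne i j with rfl | hij
    · have h5 : u i * u i = v i * v i := abs_mul_abs_self _
      refine le_of_eq ?_
      calc v i * (A i i * v i) = A i i * (v i * v i) := by ring
        _ = A i i * (u i * u i) := by rw [h5]
        _ = u i * (A i i * u i) := by ring
    · have h2 := hP2 i j hij
      calc v i * (A i j * v j) = A i j * (v i * v j) := by ring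
        _ ≤ A i j * |v i * v j| := by
            exact mul_le_mul_of_nonneg_left (le_abs_self _) h2
        _ = u i * (A i j * u j) := by rw [abs_mul]; ring
  have hnorm : u ⬝ᵥ u = v ⬝ᵥ v := by
    simp [dotProduct, hudef, abs_mul_abs_self]
  have heq : u ⬝ᵥ A.mulVec u = lam * (u ⬝ᵥ u) := by
    have h3 : v ⬝ᵥ A.mulVec v = lam * (v ⬝ᵥ v) := by
      rw [hv, dotProduct_smul]; rfl
    have h6 := hray u
    rw [hnorm] at h6 ⊢
    linarith
  have hker : (lam • (1 : Matrix (Fin N) (Fin N) ℝ) - A).mulVec u = 0 := by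
    rw [← hpsd.dotProduct_mulVec_zero_iff u]
    rw [sub_mulVec, dotProduct_sub, smul_mulVec, one_mulVec, dotProduct_smul]
    simp only [star_trivial, smul_eq_mul]
    linarith
  rw [sub_mulVec, sub_eq_zero, smul_mulVec, one_mulVec] at hker
  exact hker.symm

/-- Koike–Uehara, Proposition 3.2 (iii), integral version.
For a real `N × N` matrix `A` (with `N > 0`) satisfying (P1)–(P3) and having
integer entries, the largest eigenvalue `λ(A)` is strictly negative if and
only if there exists `m ∈ ℤ₊^N` (all entries strictly positive integers)
such that all entries of `A · m` are strictly negative. -/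
theorem largest_eigenvalue_neg_iff_int
    (N : ℕ) (hN : 0 < N) (A : Matrix (Fin N) (Fin N) ℝ)
    (hP1 : A.IsHermitian)
    (hP2 : ∀ i j : Fin N, i ≠ j → 0 ≤ A i j)
    (hP3 : ∀ I : Set (Fin N), I.Nonempty → Iᶜ.Nonempty →
      ∃ i ∈ I, ∃ j ∈ Iᶜ, 0 < A i j)
    (hint : ∀ i j : Fin N, ∃ z : ℤ, A i j = (z : ℝ)) :
    ((⨆ i, hP1.eigenvalues i) < 0) ↔
      ∃ m : Fin N → ℝ, (∀ i, ∃ z : ℤ, 0 < z ∧ m i = (z : ℝ)) ∧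
        (∀ i, A.mulVec m i < 0) := by
  have : Nonempty (Fin N) := ⟨⟨0, hN⟩⟩
  set lam := ⨆ i, hP1.eigenvalues i with hlamdef
  obtain ⟨u, hu0, hunn, huv⟩ := eig_aux N hN A hP1 hP2
  have hsym : ∀ i j, A i j = A j i := fun i j => (hP1.apply i j).symm
  -- some index where u is positive
  obtain ⟨i₁, hi₁⟩ : ∃ i, 0 < u i := by
    obtain ⟨i, hi⟩ := Function.ne_iff.mp hu0
    exact ⟨i, lt_of_le_of_ne (hunn i) (Ne.symm hi)⟩
  constructor
  · intro hneg
    -- strict positivity of u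
    have hupos : ∀ i, 0 < u i := by
      by_contra h
      push_neg at h
      obtain ⟨j₁, hj₁⟩ := h
      set S : Set (Fin N) := {i | 0 < u i} with hS
      obtain ⟨i, hiS, j, hjSc, hij⟩ :=
        hP3 S ⟨i₁, hi₁⟩ ⟨j₁, by simpa [hS] using hj₁⟩
      have huj : u j = 0 := le_antisymm (by simpa [hS] using hjSc) (hunn j)
      have hpos : 0 < A.mulVec u j := by
        rw [show A.mulVec u j = ∑ k, A j k * u k from rfl]
        refine Finset.sum_pos' (fun k _ => ?_) ⟨i, Finset.mem_univ i, ?_⟩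
        · rcases eq_or_ne j k with rfl | hjk
          · simp [huj]
          · exact mul_nonneg (hP2 j k hjk) (hunn k)
        · exact mul_pos (by rwa [← hsym i j]) hiS
      rw [huv] at hpos
      simp only [Pi.smul_apply, huj, smul_eq_mul, mul_zero] at hpos
      exact lt_irrefl 0 hpos
    -- A u = lam • u is entrywise negative
    set r : Fin N → ℝ := A.mulVec u with hr
    have hrneg : ∀ i, r i < 0 := fun i => by
      have h5 : r i = lam * u i := by rw [huv]; rfl
      rw [h5]
      exact mul_neg_of_neg_of_pos hneg (hupos i)
    -- constants
    set C : ℝ := (∑ i, ∑ j, |A i j|) + 1 with hC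
    have hC1 : 0 ≤ ∑ i : Fin N, ∑ j, |A i j| :=
      Finset.sum_nonneg fun i _ => Finset.sum_nonneg fun j _ => abs_nonneg _
    have hCpos : 0 < C := by positivity
    have hrow : ∀ i, (∑ j, |A i j|) ≤ C - 1 := by
      intro i
      rw [hC]
      have := Finset.single_le_sum (f := fun i => ∑ j, |A i j|)
        (fun i _ => Finset.sum_nonneg fun j _ => abs_nonneg _) (Finset.mem_univ i)
      linarith
    obtain ⟨i₂, hi₂⟩ := Finite.exists_max r
    set δ : ℝ := -r i₂ with hδ
    have hδpos : 0 < δ := by simp [hδ]; linarith [hrneg i₂]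
    have hδle : ∀ i, δ ≤ -r i := fun i => by simp [hδ]; exact hi₂ i
    set ε : ℝ := δ / C with hε
    have hεpos : 0 < ε := div_pos hδpos hCpos
    -- rational approximation
    have hratex : ∀ i, ∃ q : ℚ, u i < (q : ℝ) ∧ (q : ℝ) < u i + ε := by
      intro i
      obtain ⟨q, h1, h2⟩ := exists_rat_btwn (show u i < u i + ε by linarith)
      exact ⟨q, h1, h2⟩
    choose q hq1 hq2 using hratex
    set q' : Fin N → ℝ := fun i => (q i : ℝ) with hq'
    set d : ℕ := ∏ i, (q i).den with hd
    have hdpos : 0 < d := Finset.prod_pos fun i _ => (q i).pos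
    have hdvd : ∀ i, (q i).den ∣ d := fun i => Finset.dvd_prod_of_mem _ (Finset.mem_univ i)
    refine ⟨fun i => (d : ℝ) * (q i : ℝ), ?_, ?_⟩
    · intro i
      set k : ℕ := d / (q i).den with hk
      refine ⟨(q i).num * (k : ℤ), ?_, ?_⟩
      · have hnum : 0 < (q i).num := Rat.num_pos.mpr (by exact_mod_cast (hupos i).trans (hq1 i))
        have hkpos : 0 < k := Nat.div_pos (Nat.le_of_dvd hdpos (hdvd i)) (q i).pos
        positivity
      · have hden : ((q i).den : ℝ) ≠ 0 := Nat.cast_ne_zero.mpr (q i).den_nz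
        have hcast : (d : ℝ) = ((q i).den : ℝ) * (k : ℝ) := by
          rw [← Nat.cast_mul, hk, Nat.mul_div_cancel' (hdvd i)]
        have hqval : (q i : ℝ) = ((q i).num : ℝ) / ((q i).den : ℝ) := by
          exact_mod_cast (Rat.cast_def (K := ℝ) (q i))
        show (d : ℝ) * (q i : ℝ) = (((q i).num * (k : ℤ) : ℤ) : ℝ)
        rw [hcast, hqval]
        push_cast
        field_simp
    · intro i
      have hmv : A.mulVec (fun i => (d : ℝ) * (q i : ℝ)) i = (d : ℝ) * A.mulVec q' i := by
        have : (fun i => (d : ℝ) * (q i : ℝ)) = (d : ℝ) • q' := by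
          funext i; simp [hq']
        rw [this, mulVec_smul]
        rfl
      rw [hmv]
      refine mul_neg_of_pos_of_neg (by exact_mod_cast hdpos) ?_
      -- perturbation bound
      have hpert : |A.mulVec (q' - u) i| ≤ (C - 1) * ε := by
        calc |A.mulVec (q' - u) i| = |∑ j, A i j * (q' j - u j)| := rfl
          _ ≤ ∑ j, |A i j * (q' j - u j)| := Finset.abs_sum_le_sum_abs _ _
          _ ≤ ∑ j, |A i j| * ε := by
              refine Finset.sum_le_sum fun j _ => ?_
              rw [abs_mul]
              refine mul_le_mul_of_nonneg_left ?_ (abs_nonneg _)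
              rw [abs_of_pos (by linarith [hq1 j, hq2 j] : 0 < q' j - u j)]
              linarith [hq2 j]
          _ = (∑ j, |A i j|) * ε := by rw [Finset.sum_mul]
          _ ≤ (C - 1) * ε := mul_le_mul_of_nonneg_right (hrow i) hεpos.le
      have hsplit : A.mulVec q' i = r i + A.mulVec (q' - u) i := by
        rw [hr, mulVec_sub]
        simp
      have hCe : C * ε = δ := by
        rw [hε, mul_div_cancel₀ _ (ne_of_gt hCpos)]
      have h1 : A.mulVec (q' - u) i ≤ (C - 1) * ε := (le_abs_self _).trans hpert
      have h2 : (C - 1) * ε < C * ε := by nlinarith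
      have := hδle i
      rw [hsplit]
      linarith
  · rintro ⟨m, hm, hAm⟩
    have hmpos : ∀ i, 0 < m i := by
      intro i
      obtain ⟨z, hz, he⟩ := hm i
      rw [he]
      exact_mod_cast hz
    have h1 : m ⬝ᵥ A.mulVec u = lam * (m ⬝ᵥ u) := by
      rw [huv, dotProduct_smul]
      rfl
    have h2 : m ⬝ᵥ A.mulVec u = (A.mulVec m) ⬝ᵥ u := by
      simp only [dotProduct, mulVec, Finset.mul_sum, Finset.sum_mul]
      rw [Finset.sum_comm]
      refine Finset.sum_congr rfl fun i _ => Finset.sum_congr rfl fun j _ => ?_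
      rw [hsym j i]
      ring
    have h3 : 0 < m ⬝ᵥ u :=
      Finset.sum_pos' (fun i _ => mul_nonneg (hmpos i).le (hunn i))
        ⟨i₁, Finset.mem_univ i₁, mul_pos (hmpos i₁) hi₁⟩
    have h4 : (A.mulVec m) ⬝ᵥ u < 0 := by
      have : ∀ i ∈ Finset.univ, (A.mulVec m i) * u i ≤ 0 :=
        fun i _ => mul_nonpos_of_nonpos_of_nonneg (hAm i).le (hunn i)
      calc (A.mulVec m) ⬝ᵥ u = ∑ i, (A.mulVec m i) * u i := rfl
        _ < 0 := by
            have hterm : (A.mulVec m i₁) * u i₁ < 0 :=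
              mul_neg_of_neg_of_pos (hAm i₁) hi₁
            calc ∑ i, (A.mulVec m i) * u i
                ≤ ∑ i ∈ Finset.univ \ {i₁}, (A.mulVec m i) * u i + (A.mulVec m i₁) * u i₁ := by
                  rw [Finset.sum_eq_sum_sdiff_singleton_add (Finset.mem_univ i₁)]
              _ < 0 := by
                  have : ∑ i ∈ Finset.univ \ {i₁}, (A.mulVec m i) * u i ≤ 0 :=
                    Finset.sum_nonpos fun i hi => this i (Finset.mem_univ i)
                  linarith
    have : lam * (m ⬝ᵥ u) < 0 := by rw [← h1, h2]; exact h4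
    by_contra hcon
    push_neg at hcon
    nlinarith
end
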